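/- arXiv:0804.4084 — 5 statements merged into one kernel-verified Lean document; each statement's English description precedes it below -/
import Mathlib

section
/- For any real numbers λ₁, λ₂, λ₃, λ₄, the skew-symmetric bilinear bracket on ℝ⁴ with basis X₁, X₂, X₃, X₄ determined by [X₁,X₂] = λ₁X₃ + λ₂X₄, [X₁,X₃] = −λ₁X₂ + λ₄X₄, [X₁,X₄] = −λ₂X₂ − λ₄X₃, [X₂,X₃] = λ₁X₁ + λ₃X₄, [X₂,X₄] = λ₂X₁ − λ₃X₃, [X₃,X₄] = λ₄X₁ + λ₃X₂ satisfies the Jacobi identity, and hence defines a Lie algebra structure. -/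
set_option maxHeartbeats 2000000


/-- For any real numbers `λ₁, λ₂, λ₃, λ₄`, the skew-symmetric bilinear bracket on `ℝ⁴`
determined on the standard basis `X₁, X₂, X₃, X₄` by
`[X₁,X₂] = λ₁X₃ + λ₂X₄`, `[X₁,X₃] = −λ₁X₂ + λ₄X₄`, `[X₁,X₄] = −λ₂X₂ − λ₄X₃`,
`[X₂,X₃] = λ₁X₁ + λ₃X₄`, `[X₂,X₄] = λ₂X₁ − λ₃X₃`, `[X₃,X₄] = λ₄X₁ + λ₃X₂`
satisfies the Jacobi identity (and hence defines a Lie algebra structure). -/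
theorem jacobi_riemannian_family (l1 l2 l3 l4 : ℝ)
    (B : (Fin 4 → ℝ) →ₗ[ℝ] (Fin 4 → ℝ) →ₗ[ℝ] (Fin 4 → ℝ))
    (hskew : ∀ x y, B x y = -B y x)
    (X : Fin 4 → (Fin 4 → ℝ)) (hX : X = fun i => Pi.single i 1)
    (h12 : B (X 0) (X 1) = l1 • X 2 + l2 • X 3)
    (h13 : B (X 0) (X 2) = -(l1 • X 1) + l4 • X 3)
    (h14 : B (X 0) (X 3) = -(l2 • X 1) - l4 • X 2)
    (h23 : B (X 1) (X 2) = l1 • X 0 + l3 • X 3)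
    (h24 : B (X 1) (X 3) = l2 • X 0 - l3 • X 2)
    (h34 : B (X 2) (X 3) = l4 • X 0 + l3 • X 1) :
    ∀ x y z : Fin 4 → ℝ, B (B x y) z + B (B y z) x + B (B z x) y = 0 := by
  have hdiag : ∀ v, B v v = 0 := by
    intro v
    have h := hskew v v
    rw [eq_neg_iff_add_eq_zero, ← two_smul ℝ, smul_eq_zero] at h
    rcases h with h | h
    · norm_num at h
    · exact h
  have h21 : B (X 1) (X 0) = -(l1 • X 2 + l2 • X 3) := by rw [hskew, h12]
  have h31 : B (X 2) (X 0) = -(-(l1 • X 1) + l4 • X 3) := by rw [hskew, h13]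
  have h41 : B (X 3) (X 0) = -(-(l2 • X 1) - l4 • X 2) := by rw [hskew, h14]
  have h32 : B (X 2) (X 1) = -(l1 • X 0 + l3 • X 3) := by rw [hskew, h23]
  have h42 : B (X 3) (X 1) = -(l2 • X 0 - l3 • X 2) := by rw [hskew, h24]
  have h43 : B (X 3) (X 2) = -(l4 • X 0 + l3 • X 1) := by rw [hskew, h34]
  have hrep : ∀ v : Fin 4 → ℝ, v = v 0 • X 0 + v 1 • X 1 + v 2 • X 2 + v 3 • X 3 := by
    subst hX
    intro v
    ext j
    fin_cases j <;> simp [Pi.single_apply]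
  intro x y z
  rw [hrep x, hrep y, hrep z]
  simp only [map_add, map_smul, LinearMap.add_apply, LinearMap.smul_apply,
    h12, h13, h14, h23, h24, h34, h21, h31, h41, h32, h42, h43, hdiag,
    smul_add, smul_neg, smul_sub, smul_smul, map_neg, map_sub,
    LinearMap.neg_apply, LinearMap.sub_apply, LinearMap.zero_apply, map_zero,
    smul_zero]
  module
end

section
/- In the Riemannian Lie algebra family, the tensor F satisfies the cyclic identity F(x,y,z) + F(y,z,x) + F(z,x,y) = 0 for all x, y, z ∈ 𝔤 (i.e., the manifold belongs to the class 𝒲₃). -/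
noncomputable section

/-- The inner product for which the basis `b` is orthonormal. -/
def gR {L : Type*} [AddCommGroup L] [Module ℝ L] (b : Module.Basis (Fin 4) ℝ L) (x y : L) : ℝ :=
  ∑ i, b.repr x i * b.repr y i

/-- The almost product structure `P` with `PX₁ = X₃`, `PX₂ = X₄`, `PX₃ = X₁`, `PX₄ = X₂`. -/
def PR {L : Type*} [AddCommGroup L] [Module ℝ L] (b : Module.Basis (Fin 4) ℝ L) : L →ₗ[ℝ] L :=
  b.constr ℝ ![b 2, b 3, b 0, b 1]

/-- `(∇ₓP)y = (1/2)([x,Py] − P[x,y])`. -/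
def nablaP {L : Type*} [LieRing L] [LieAlgebra ℝ L] (b : Module.Basis (Fin 4) ℝ L) (x y : L) : L :=
  (2⁻¹ : ℝ) • (⁅x, PR b y⁆ - PR b ⁅x, y⁆)

/-- `F(x,y,z) = g((∇ₓP)y, z)`. -/
def FR {L : Type*} [LieRing L] [LieAlgebra ℝ L] (b : Module.Basis (Fin 4) ℝ L) (x y z : L) : ℝ :=
  gR b (nablaP b x y) z

/-- The curvature tensor `R(x,y,z,w) = −(1/4)g([x,y],[z,w])`. -/
def RT {L : Type*} [LieRing L] [LieAlgebra ℝ L] (b : Module.Basis (Fin 4) ℝ L) (x y z w : L) : ℝ :=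
  -(4⁻¹ : ℝ) * gR b ⁅x, y⁆ ⁅z, w⁆

/-- The Ricci tensor `ρ(y,z) = Σᵢ R(Xᵢ,y,z,Xᵢ)`. -/
def ricR {L : Type*} [LieRing L] [LieAlgebra ℝ L] (b : Module.Basis (Fin 4) ℝ L) (y z : L) : ℝ :=
  ∑ i, RT b (b i) y z (b i)

/-- The scalar curvature `τ = Σᵢ ρ(Xᵢ,Xᵢ)`. -/
def tauR {L : Type*} [LieRing L] [LieAlgebra ℝ L] (b : Module.Basis (Fin 4) ℝ L) : ℝ :=
  ∑ i, ricR b (b i) (b i)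

/-- The Nijenhuis tensor `N(x,y) = [x,y] + P[Px,y] + P[x,Py] − [Px,Py]`. -/
def NijR {L : Type*} [LieRing L] [LieAlgebra ℝ L] (b : Module.Basis (Fin 4) ℝ L) (x y : L) : L :=
  ⁅x, y⁆ + PR b ⁅PR b x, y⁆ + PR b ⁅x, PR b y⁆ - ⁅PR b x, PR b y⁆

/-- Sectional curvature of the 2-plane spanned by `Xᵢ` and `Xⱼ`. -/
def sectR {L : Type*} [LieRing L] [LieAlgebra ℝ L] (b : Module.Basis (Fin 4) ℝ L) (i j : Fin 4) : ℝ :=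
  RT b (b i) (b j) (b j) (b i) /
    (gR b (b i) (b i) * gR b (b j) (b j) - (gR b (b i) (b j)) ^ 2)

/-!
The metric is bi-invariant: the structure constants `g([Xᵢ, Xⱼ], Xₖ)` are totally antisymmetric,
so `g([x, y], z)` is invariant under cyclic permutations of `x, y, z`. As `P` permutes the
orthonormal basis by an involution, it is `g`-symmetric, hence
`2 F(x, y, z) = g([x, Py], z) - g([x, y], Pz)`, and after a cyclic permutation each subtracted
term equals one of the added ones.
-/

open LinearMap (BilinForm)

section LieInvariant

variable {R L : Type*} [CommRing R] [LieRing L] [LieAlgebra R L] {Φ : BilinForm R L}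

theorem LinearMap.BilinForm.lieInvariant_of_basis {ι : Type*} [Fintype ι] (b : Module.Basis ι R L)
    (h : ∀ i j k, Φ ⁅b i, b j⁆ (b k) = -Φ (b j) ⁅b i, b k⁆) : Φ.lieInvariant L := by
  intro x y z
  rw [← b.sum_repr x, ← b.sum_repr y, ← b.sum_repr z]
  simp only [sum_lie, lie_sum, smul_lie, lie_smul, map_sum, map_smul, LinearMap.sum_apply,
    LinearMap.smul_apply, ← Finset.sum_neg_distrib, ← smul_neg, h]
  refine Finset.sum_congr rfl fun k _ => congrArg _ ?_
  simp only [Finset.smul_sum, smul_comm (b.repr y _)]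
  exact Finset.sum_comm

theorem LinearMap.BilinForm.lieInvariant.apply_lie_cyclic (hinv : Φ.lieInvariant L)
    (hΦ : Φ.IsSymm) (x y z : L) : Φ ⁅x, y⁆ z = Φ ⁅y, z⁆ x := by
  rw [hinv y z x, ← lie_skew x y, map_neg, LinearMap.neg_apply, hΦ.eq]

theorem LinearMap.BilinForm.lieInvariant.cyclic_sum_apply_lie_sub_map_lie_eq_zero
    (hinv : Φ.lieInvariant L) (hΦ : Φ.IsSymm) {P : L →ₗ[R] L} (hP : Φ.IsSelfAdjoint P)
    (x y z : L) :
    Φ (⁅x, P y⁆ - P ⁅x, y⁆) z + Φ (⁅y, P z⁆ - P ⁅y, z⁆) x + Φ (⁅z, P x⁆ - P ⁅z, x⁆) y = 0 := by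
  simp only [map_sub, LinearMap.sub_apply, hP _ _]
  rw [hinv.apply_lie_cyclic hΦ z x, hinv.apply_lie_cyclic hΦ x y, hinv.apply_lie_cyclic hΦ y z]
  abel

end LieInvariant

section OrthonormalBasis

variable {R M ι : Type*} [CommRing R] [AddCommGroup M] [Module R M] [Fintype ι] [DecidableEq ι]
  (b : Module.Basis ι R M)

theorem Matrix.toBilin_apply_basis (A : Matrix ι ι R) (i j : ι) :
    Matrix.toBilin b A (b i) (b j) = A i j := by
  rw [← LinearMap.BilinForm.toMatrix_apply b, LinearMap.BilinForm.toMatrix_toBilin]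

theorem Matrix.toBilin_one_apply_basis_right (x : M) (i : ι) :
    Matrix.toBilin b 1 x (b i) = b.repr x i := by
  simp [Matrix.one_apply, Finsupp.single_apply]

theorem Matrix.toBilin_one_apply_basis_left (x : M) (i : ι) :
    Matrix.toBilin b 1 (b i) x = b.repr x i := by
  simp [Matrix.one_apply, Finsupp.single_apply]

end OrthonormalBasis

section Family

variable {L : Type*} [AddCommGroup L] [Module ℝ L] (b : Module.Basis (Fin 4) ℝ L)

theorem gR_eq_toBilin_one (x y : L) : gR b x y = Matrix.toBilin b 1 x y := by
  simp [gR, Matrix.one_apply]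

theorem PR_basis (i : Fin 4) : PR b (b i) = b (i + 2) := by
  fin_cases i <;> simp [PR]

theorem isSelfAdjoint_PR : (Matrix.toBilin b 1).IsSelfAdjoint (PR b) := by
  rw [LinearMap.IsSelfAdjoint, LinearMap.isAdjointPair_iff_comp_eq_compl₂]
  refine LinearMap.BilinForm.ext_basis b fun i j => ?_
  simp only [LinearMap.comp_apply, LinearMap.compl₂_apply, PR_basis, Matrix.toBilin_apply_basis,
    Matrix.one_apply]
  congr 1
  revert i j
  decide

end Family

theorem lieInvariant_toBilin_one_of_brackets {L : Type*} [LieRing L] [LieAlgebra ℝ L]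
    (b : Module.Basis (Fin 4) ℝ L) {l1 l2 l3 l4 : ℝ}
    (h12 : ⁅b 0, b 1⁆ = l1 • b 2 + l2 • b 3)
    (h13 : ⁅b 0, b 2⁆ = -(l1 • b 1) + l4 • b 3)
    (h14 : ⁅b 0, b 3⁆ = -(l2 • b 1) - l4 • b 2)
    (h23 : ⁅b 1, b 2⁆ = l1 • b 0 + l3 • b 3)
    (h24 : ⁅b 1, b 3⁆ = l2 • b 0 - l3 • b 2)
    (h34 : ⁅b 2, b 3⁆ = l4 • b 0 + l3 • b 1) :
    (Matrix.toBilin b 1).lieInvariant L := by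
  refine LinearMap.BilinForm.lieInvariant_of_basis b fun i j k => ?_
  rw [Matrix.toBilin_one_apply_basis_right, Matrix.toBilin_one_apply_basis_left]
  fin_cases i <;> fin_cases j <;> fin_cases k <;>
    simp [h12, h13, h14, h23, h24, h34, ← lie_skew (b 1) (b 0), ← lie_skew (b 2) (b 0),
      ← lie_skew (b 3) (b 0), ← lie_skew (b 2) (b 1), ← lie_skew (b 3) (b 1),
      ← lie_skew (b 3) (b 2)]

theorem w3_class
    (L : Type*) [LieRing L] [LieAlgebra ℝ L] (b : Module.Basis (Fin 4) ℝ L)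
    (l1 l2 l3 l4 : ℝ)
    (h12 : ⁅b 0, b 1⁆ = l1 • b 2 + l2 • b 3)
    (h13 : ⁅b 0, b 2⁆ = -(l1 • b 1) + l4 • b 3)
    (h14 : ⁅b 0, b 3⁆ = -(l2 • b 1) - l4 • b 2)
    (h23 : ⁅b 1, b 2⁆ = l1 • b 0 + l3 • b 3)
    (h24 : ⁅b 1, b 3⁆ = l2 • b 0 - l3 • b 2)
    (h34 : ⁅b 2, b 3⁆ = l4 • b 0 + l3 • b 1)
    : ∀ x y z : L, FR b x y z + FR b y z x + FR b z x y = 0 := by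
  intro x y z
  have hinv := lieInvariant_toBilin_one_of_brackets b h12 h13 h14 h23 h24 h34
  have hsymm : (Matrix.toBilin b 1).IsSymm :=
    (Matrix.isSymm_toBilin_iff_isSymm b).mpr Matrix.isSymm_one
  have hcyc := hinv.cyclic_sum_apply_lie_sub_map_lie_eq_zero hsymm (isSelfAdjoint_PR b) x y z
  simp only [FR, nablaP, gR_eq_toBilin_one, map_smul, LinearMap.smul_apply, smul_eq_mul]
  linear_combination 2⁻¹ * hcyc
end
end

section
/- In the Riemannian Lie algebra family, the components R_ijks = R(X_i,X_j,X_k,X_s) of the curvature tensor satisfy: R₁₂₂₁ = ¼(λ₁²+λ₂²), R₁₃₃₁ = ¼(λ₁²+λ₄²), R₁₄₄₁ = ¼(λ₂²+λ₄²), R₂₃₃₂ = ¼(λ₁²+λ₃²), R₂₄₄₂ = ¼(λ₂²+λ₃²), R₃₄₄₃ = ¼(λ₃²+λ₄²), R₁₃₄₁ = R₂₃₄₂ = ¼λ₁λ₂, R₃₁₂₃ = R₄₁₂₄ = ¼λ₃λ₄, R₁₂₃₁ = R₄₂₃₄ = ¼λ₂λ₄, R₂₁₄₂ = R₃₁₄₃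 = ¼λ₁λ₃, R₁₂₄₁ = R₃₂₄₃ = −¼λ₁λ₄, R₂₁₃₂ = R₄₁₃₄ = −¼λ₂λ₃. -/
noncomputable section

theorem gR_eq_toDual {L : Type*} [AddCommGroup L] [Module ℝ L] (b : Module.Basis (Fin 4) ℝ L)
    (x y : L) : gR b x y = b.toDual x y := by
  conv_rhs => rw [← b.sum_repr y]
  simp only [gR, map_sum, map_smul, Module.Basis.toDual_apply_left, smul_eq_mul, mul_comm]

/-- Components (3.12) of the curvature tensor in the Riemannian family. -/
theorem R_components_riemannian
    (L : Type*) [LieRing L] [LieAlgebra ℝ L] (b : Module.Basis (Fin 4) ℝ L)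
    (l1 l2 l3 l4 : ℝ)
    (h12 : ⁅b 0, b 1⁆ = l1 • b 2 + l2 • b 3)
    (h13 : ⁅b 0, b 2⁆ = -(l1 • b 1) + l4 • b 3)
    (h14 : ⁅b 0, b 3⁆ = -(l2 • b 1) - l4 • b 2)
    (h23 : ⁅b 1, b 2⁆ = l1 • b 0 + l3 • b 3)
    (h24 : ⁅b 1, b 3⁆ = l2 • b 0 - l3 • b 2)
    (h34 : ⁅b 2, b 3⁆ = l4 • b 0 + l3 • b 1)
    : RT b (b 0) (b 1) (b 1) (b 0) = 4⁻¹ * (l1 ^ 2 + l2 ^ 2) ∧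
      RT b (b 0) (b 2) (b 2) (b 0) = 4⁻¹ * (l1 ^ 2 + l4 ^ 2) ∧
      RT b (b 0) (b 3) (b 3) (b 0) = 4⁻¹ * (l2 ^ 2 + l4 ^ 2) ∧
      RT b (b 1) (b 2) (b 2) (b 1) = 4⁻¹ * (l1 ^ 2 + l3 ^ 2) ∧
      RT b (b 1) (b 3) (b 3) (b 1) = 4⁻¹ * (l2 ^ 2 + l3 ^ 2) ∧
      RT b (b 2) (b 3) (b 3) (b 2) = 4⁻¹ * (l3 ^ 2 + l4 ^ 2) ∧
      RT b (b 0) (b 2) (b 3) (b 0) = 4⁻¹ * (l1 * l2) ∧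
      RT b (b 1) (b 2) (b 3) (b 1) = 4⁻¹ * (l1 * l2) ∧
      RT b (b 2) (b 0) (b 1) (b 2) = 4⁻¹ * (l3 * l4) ∧
      RT b (b 3) (b 0) (b 1) (b 3) = 4⁻¹ * (l3 * l4) ∧
      RT b (b 0) (b 1) (b 2) (b 0) = 4⁻¹ * (l2 * l4) ∧
      RT b (b 3) (b 1) (b 2) (b 3) = 4⁻¹ * (l2 * l4) ∧
      RT b (b 1) (b 0) (b 3) (b 1) = 4⁻¹ * (l1 * l3) ∧
      RT b (b 2) (b 0) (b 3) (b 2) = 4⁻¹ * (l1 * l3) ∧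
      RT b (b 0) (b 1) (b 3) (b 0) = -(4⁻¹ * (l1 * l4)) ∧
      RT b (b 2) (b 1) (b 3) (b 2) = -(4⁻¹ * (l1 * l4)) ∧
      RT b (b 1) (b 0) (b 2) (b 1) = -(4⁻¹ * (l2 * l3)) ∧
      RT b (b 3) (b 0) (b 2) (b 3) = -(4⁻¹ * (l2 * l3)) := by
  -- Rewriting each `⁅b j, b i⁆` with `i < j` as `-⁅b i, b j⁆` leaves only the given brackets.
  simp only [RT, gR_eq_toDual, ← lie_skew (b 1) (b 0), ← lie_skew (b 2) (b 0),
    ← lie_skew (b 3) (b 0), ← lie_skew (b 2) (b 1), ← lie_skew (b 3) (b 1), ← lie_skew (b 3) (b 2),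
    h12, h13, h14, h23, h24, h34, map_add, map_sub, map_neg, map_smul, LinearMap.add_apply,
    LinearMap.sub_apply, LinearMap.neg_apply, LinearMap.smul_apply, Module.Basis.toDual_apply]
  refine ⟨?_, ?_, ?_, ?_, ?_, ?_, ?_, ?_, ?_, ?_, ?_, ?_, ?_, ?_, ?_, ?_, ?_, ?_⟩ <;>
    norm_num [Fin.ext_iff] <;> ring
end
end

section
/- In the Riemannian Lie algebra family, the components ρ_ij = ρ(X_i,X_j) of the Ricci tensor satisfy: ρ₁₁ = ½(λ₁²+λ₂²+λ₄²), ρ₂₂ = ½(λ₁²+λ₂²+λ₃²), ρ₃₃ = ½(λ₁²+λ₃²+λ₄²), ρ₄₄ = ½(λ₂²+λ₃²+λ₄²), ρ₁₂ = ½λ₃λ₄, ρ₁₃ = −½λ₂λ₃, ρ₁₄ = ½λ₁λ₃, ρ₂₃ = ½λ₂λ₄, ρ₂₄ = −½λ₁λ₄, ρ₃₄ = ½λ₁λ₂. -/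
noncomputable section

/-!
Since `[z, Xᵢ] = -[Xᵢ, z]`, the Ricci tensor is `ρ(y, z) = ¼ Σᵢ g([Xᵢ, y], [Xᵢ, z])`. In this
family the structure constants `g([Xᵢ, Xⱼ], Xₖ)` are totally antisymmetric, hence of the form
`εᵢⱼₖₗ vₗ` for the vector `v = (-λ₃, λ₄, -λ₂, λ₁)`, and the contraction
`Σᵢₗ εᵢⱼₗₘ εᵢₖₗₙ = 2(δⱼₖ δₘₙ - δⱼₙ δₖₘ)` turns this into `ρ = ½ (|v|² g - v ⊗ v)`.
-/

theorem gR_neg_right {L : Type*} [AddCommGroup L] [Module ℝ L] (b : Module.Basis (Fin 4) ℝ L)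
    (x y : L) : gR b x (-y) = -gR b x y := by
  simp only [gR, map_neg, Finsupp.coe_neg, Pi.neg_apply, mul_neg, Finset.sum_neg_distrib]

theorem ricR_eq_sum_gR_lie {L : Type*} [LieRing L] [LieAlgebra ℝ L]
    (b : Module.Basis (Fin 4) ℝ L) (y z : L) :
    ricR b y z = 4⁻¹ * ∑ i, gR b ⁅b i, y⁆ ⁅b i, z⁆ := by
  rw [ricR, Finset.mul_sum]
  refine Finset.sum_congr rfl fun i _ => ?_
  rw [RT, ← lie_skew (b i) z, gR_neg_right]
  ring

/-- Here `b i` is `X_{i+1}`. -/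
structure IsRiemannianFamily {L : Type*} [LieRing L] [LieAlgebra ℝ L]
    (b : Module.Basis (Fin 4) ℝ L) (l1 l2 l3 l4 : ℝ) : Prop where
  lie_01 : ⁅b 0, b 1⁆ = l1 • b 2 + l2 • b 3
  lie_02 : ⁅b 0, b 2⁆ = -(l1 • b 1) + l4 • b 3
  lie_03 : ⁅b 0, b 3⁆ = -(l2 • b 1) - l4 • b 2
  lie_12 : ⁅b 1, b 2⁆ = l1 • b 0 + l3 • b 3
  lie_13 : ⁅b 1, b 3⁆ = l2 • b 0 - l3 • b 2
  lie_23 : ⁅b 2, b 3⁆ = l4 • b 0 + l3 • b 1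

def dualVector (l1 l2 l3 l4 : ℝ) : Fin 4 → ℝ :=
  ![-l3, l4, -l2, l1]

open Matrix in
theorem IsRiemannianFamily.ricR_basis_eq {L : Type*} [LieRing L] [LieAlgebra ℝ L]
    {b : Module.Basis (Fin 4) ℝ L} {l1 l2 l3 l4 : ℝ} (h : IsRiemannianFamily b l1 l2 l3 l4) :
    of (fun j k => ricR b (b j) (b k)) =
      (2⁻¹ : ℝ) • ((dualVector l1 l2 l3 l4 ⬝ᵥ dualVector l1 l2 l3 l4) • 1 -
        vecMulVec (dualVector l1 l2 l3 l4) (dualVector l1 l2 l3 l4)) := by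
  have h10 : ⁅b 1, b 0⁆ = -(l1 • b 2 + l2 • b 3) := by rw [← lie_skew, h.lie_01]
  have h20 : ⁅b 2, b 0⁆ = -(-(l1 • b 1) + l4 • b 3) := by rw [← lie_skew, h.lie_02]
  have h30 : ⁅b 3, b 0⁆ = -(-(l2 • b 1) - l4 • b 2) := by rw [← lie_skew, h.lie_03]
  have h21 : ⁅b 2, b 1⁆ = -(l1 • b 0 + l3 • b 3) := by rw [← lie_skew, h.lie_12]
  have h31 : ⁅b 3, b 1⁆ = -(l2 • b 0 - l3 • b 2) := by rw [← lie_skew, h.lie_13]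
  have h32 : ⁅b 3, b 2⁆ = -(l4 • b 0 + l3 • b 1) := by rw [← lie_skew, h.lie_23]
  ext j k
  fin_cases j <;> fin_cases k <;>
  · simp only [ricR_eq_sum_gR_lie, gR, Fin.sum_univ_four, h.lie_01, h.lie_02, h.lie_03, h.lie_12,
      h.lie_13, h.lie_23, h10, h20, h30, h21, h31, h32, lie_self, map_add, map_smul, map_neg,
      map_sub, map_zero, Module.Basis.repr_self, Finsupp.coe_add, Finsupp.coe_smul,
      Finsupp.coe_neg, Finsupp.coe_sub, Finsupp.coe_zero, Pi.add_apply, Pi.smul_apply,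
      Pi.neg_apply, Pi.sub_apply, Pi.zero_apply, Finsupp.single_apply, smul_eq_mul, Fin.isValue,
      Fin.reduceEq, reduceIte, Fin.zero_eta, Fin.mk_one, Fin.reduceFinMk, dualVector, cons_val,
      dotProduct, vecMulVec_apply, of_apply, Matrix.smul_apply, Matrix.sub_apply, one_apply]
    ring

/-- Components (3.13) of the Ricci tensor in the Riemannian family. -/
theorem ricci_components_riemannian
    (L : Type*) [LieRing L] [LieAlgebra ℝ L] (b : Module.Basis (Fin 4) ℝ L)
    (l1 l2 l3 l4 : ℝ)
    (h12 : ⁅b 0, b 1⁆ = l1 • b 2 + l2 • b 3)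
    (h13 : ⁅b 0, b 2⁆ = -(l1 • b 1) + l4 • b 3)
    (h14 : ⁅b 0, b 3⁆ = -(l2 • b 1) - l4 • b 2)
    (h23 : ⁅b 1, b 2⁆ = l1 • b 0 + l3 • b 3)
    (h24 : ⁅b 1, b 3⁆ = l2 • b 0 - l3 • b 2)
    (h34 : ⁅b 2, b 3⁆ = l4 • b 0 + l3 • b 1)
    : ricR b (b 0) (b 0) = 2⁻¹ * (l1 ^ 2 + l2 ^ 2 + l4 ^ 2) ∧
      ricR b (b 1) (b 1) = 2⁻¹ * (l1 ^ 2 + l2 ^ 2 + l3 ^ 2) ∧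
      ricR b (b 2) (b 2) = 2⁻¹ * (l1 ^ 2 + l3 ^ 2 + l4 ^ 2) ∧
      ricR b (b 3) (b 3) = 2⁻¹ * (l2 ^ 2 + l3 ^ 2 + l4 ^ 2) ∧
      ricR b (b 0) (b 1) = 2⁻¹ * (l3 * l4) ∧
      ricR b (b 0) (b 2) = -(2⁻¹ * (l2 * l3)) ∧
      ricR b (b 0) (b 3) = 2⁻¹ * (l1 * l3) ∧
      ricR b (b 1) (b 2) = 2⁻¹ * (l2 * l4) ∧
      ricR b (b 1) (b 3) = -(2⁻¹ * (l1 * l4)) ∧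
      ricR b (b 2) (b 3) = 2⁻¹ * (l1 * l2) := by
  have hρ (j k : Fin 4) :=
    congrFun₂ (IsRiemannianFamily.ricR_basis_eq ⟨h12, h13, h14, h23, h24, h34⟩) j k
  simp only [Matrix.of_apply, Matrix.smul_apply, Matrix.sub_apply, Matrix.one_apply,
    Matrix.vecMulVec_apply, dotProduct, Fin.sum_univ_four, dualVector, Matrix.cons_val,
    smul_eq_mul] at hρ
  refine ⟨?_, ?_, ?_, ?_, ?_, ?_, ?_, ?_, ?_, ?_⟩ <;>
  · simp only [hρ, Matrix.cons_val, Fin.reduceEq, ↓reduceIte]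
    ring
end
end

section
/- For any real numbers λ₁, λ₂, λ₃, λ₄, the skew-symmetric bilinear bracket on ℝ⁴ with basis X₁, X₂, X₃, X₄ determined by [X₁,X₂] = λ₂X₃ − λ₁X₄, [X₁,X₃] = λ₂X₂ + λ₄X₄, [X₁,X₄] = −λ₁X₂ − λ₄X₃, [X₂,X₃] = −λ₂X₁ − λ₃X₄, [X₂,X₄] = λ₁X₁ + λ₃X₃, [X₃,X₄] = −λ₄X₁ + λ₃X₂ satisfies the Jacobi identity, and hence defines a Lie algebra structure. -/
set_option maxHeartbeats 2000000 in
/-- For any real numbers `λ₁, λ₂, λ₃, λ₄`, the skew-symmetric bilinear bracket on `ℝ⁴`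
determined on the standard basis `X₁, X₂, X₃, X₄` by
`[X₁,X₂] = λ₂X₃ − λ₁X₄`, `[X₁,X₃] = λ₂X₂ + λ₄X₄`, `[X₁,X₄] = −λ₁X₂ − λ₄X₃`,
`[X₂,X₃] = −λ₂X₁ − λ₃X₄`, `[X₂,X₄] = λ₁X₁ + λ₃X₃`, `[X₃,X₄] = −λ₄X₁ + λ₃X₂`
satisfies the Jacobi identity (and hence defines a Lie algebra structure). -/
theorem jacobi_pseudoRiemannian_family (l1 l2 l3 l4 : ℝ)
    (B : (Fin 4 → ℝ) →ₗ[ℝ] (Fin 4 → ℝ) →ₗ[ℝ] (Fin 4 → ℝ))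
    (hskew : ∀ x y, B x y = -B y x)
    (X : Fin 4 → (Fin 4 → ℝ)) (hX : X = fun i => Pi.single i 1)
    (h12 : B (X 0) (X 1) = l2 • X 2 - l1 • X 3)
    (h13 : B (X 0) (X 2) = l2 • X 1 + l4 • X 3)
    (h14 : B (X 0) (X 3) = -(l1 • X 1) - l4 • X 2)
    (h23 : B (X 1) (X 2) = -(l2 • X 0) - l3 • X 3)
    (h24 : B (X 1) (X 3) = l1 • X 0 + l3 • X 2)
    (h34 : B (X 2) (X 3) = -(l4 • X 0) + l3 • X 1) :
    ∀ x y z : Fin 4 → ℝ, B (B x y) z + B (B y z) x + B (B z x) y = 0 := by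
  -- diagonal brackets vanish
  have hdiag : ∀ v, B v v = 0 := by
    intro v
    have h := hskew v v
    have h2 : B v v + B v v = 0 := by nth_rewrite 2 [h]; abel
    have h3 : (2 : ℝ) • B v v = 0 := by rw [two_smul]; exact h2
    simpa using (smul_eq_zero.mp h3).resolve_left (by norm_num)
  -- full bracket table
  have h21 : B (X 1) (X 0) = -(l2 • X 2 - l1 • X 3) := by rw [hskew, h12]
  have h31 : B (X 2) (X 0) = -(l2 • X 1 + l4 • X 3) := by rw [hskew, h13]
  have h41 : B (X 3) (X 0) = -(-(l1 • X 1) - l4 • X 2) := by rw [hskew, h14]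
  have h32 : B (X 2) (X 1) = -(-(l2 • X 0) - l3 • X 3) := by rw [hskew, h23]
  have h42 : B (X 3) (X 1) = -(l1 • X 0 + l3 • X 2) := by rw [hskew, h24]
  have h43 : B (X 3) (X 2) = -(-(l4 • X 0) + l3 • X 1) := by rw [hskew, h34]
  have h11 : B (X 0) (X 0) = 0 := hdiag _
  have h22 : B (X 1) (X 1) = 0 := hdiag _
  have h33 : B (X 2) (X 2) = 0 := hdiag _
  have h44 : B (X 3) (X 3) = 0 := hdiag _
  -- Jacobi on basis vectors
  have key : ∀ i j k : Fin 4,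
      B (B (X i) (X j)) (X k) + B (B (X j) (X k)) (X i) + B (B (X k) (X i)) (X j) = 0 := by
    have hfin : ∀ m : Fin 4, m = 0 ∨ m = 1 ∨ m = 2 ∨ m = 3 := by decide
    intro i j k
    rcases hfin i with rfl | rfl | rfl | rfl <;>
      rcases hfin j with rfl | rfl | rfl | rfl <;>
      rcases hfin k with rfl | rfl | rfl | rfl <;>
      simp only [Fin.isValue, h11, h22, h33, h44, h12, h13, h14, h23, h24, h34,
        h21, h31, h41, h32, h42, h43, map_add, map_sub, map_neg, map_smul, map_zero,
        LinearMap.add_apply, LinearMap.sub_apply, LinearMap.neg_apply,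
        LinearMap.smul_apply, LinearMap.zero_apply] <;>
      module
  -- expansion of vectors in the standard basis
  have hrepr : ∀ v : Fin 4 → ℝ, v = ∑ i, v i • X i := by
    intro v
    subst hX
    simp only [smul_eq_mul]
    have : ∀ i : Fin 4, v i • (Pi.single i 1 : Fin 4 → ℝ) = Pi.single i (v i) := by
      intro i
      rw [← Pi.single_smul, smul_eq_mul, mul_one]
    calc v = ∑ i, Pi.single i (v i) := (Finset.univ_sum_single v).symm
      _ = ∑ i, v i • (fun i => (Pi.single i 1 : Fin 4 → ℝ)) i := by
          exact Finset.sum_congr rfl fun i _ => (this i).symm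
  have expand2 : ∀ v w, B v w = ∑ i, ∑ j, (v i * w j) • B (X i) (X j) := by
    intro v w
    conv_lhs => rw [hrepr v, hrepr w]
    simp only [map_sum, LinearMap.sum_apply, map_smul, LinearMap.smul_apply,
      Finset.smul_sum, smul_smul]
    rw [Finset.sum_comm]
    exact Finset.sum_congr rfl fun i _ => Finset.sum_congr rfl fun j _ => by rw [mul_comm]
  have expandR : ∀ u w, B u w = ∑ k, w k • B u (X k) := by
    intro u w
    conv_lhs => rw [hrepr w]
    simp only [map_sum, map_smul]
  have expand3 : ∀ x y z, B (B x y) z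
      = ∑ i, ∑ j, ∑ k, ((x i * y j) * z k) • B (B (X i) (X j)) (X k) := by
    intro x y z
    rw [expand2 x y]
    simp only [map_sum, LinearMap.sum_apply, map_smul, LinearMap.smul_apply]
    refine Finset.sum_congr rfl fun i _ => Finset.sum_congr rfl fun j _ => ?_
    rw [expandR (B (X i) (X j)) z, Finset.smul_sum]
    refine Finset.sum_congr rfl fun k _ => ?_
    rw [smul_smul, mul_comm (x i * y j) (z k), mul_comm (z k) (x i * y j)]
  -- cyclic reordering of triple sums
  have comm3 : ∀ f : Fin 4 → Fin 4 → Fin 4 → (Fin 4 → ℝ),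
      ∑ p, ∑ q, ∑ r, f p q r = ∑ r, ∑ p, ∑ q, f p q r := by
    intro f
    calc ∑ p, ∑ q, ∑ r, f p q r = ∑ p, ∑ r, ∑ q, f p q r :=
          Finset.sum_congr rfl fun p _ => Finset.sum_comm
      _ = ∑ r, ∑ p, ∑ q, f p q r := Finset.sum_comm
  intro x y z
  rw [expand3 x y z, expand3 y z x, expand3 z x y,
    comm3 (fun p q r => ((y p * z q) * x r) • B (B (X p) (X q)) (X r)),
    comm3 (fun p q r => ((z p * x q) * y r) • B (B (X p) (X q)) (X r)),
    comm3 (fun r p q => ((z p * x q) * y r) • B (B (X p) (X q)) (X r))]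
  rw [← Finset.sum_add_distrib, ← Finset.sum_add_distrib]
  refine Finset.sum_eq_zero fun i _ => ?_
  rw [← Finset.sum_add_distrib, ← Finset.sum_add_distrib]
  refine Finset.sum_eq_zero fun j _ => ?_
  rw [← Finset.sum_add_distrib, ← Finset.sum_add_distrib]
  refine Finset.sum_eq_zero fun k _ => ?_
  have hk := key i j k
  have hC : B (B (X k) (X i)) (X j)
      = -(B (B (X i) (X j)) (X k) + B (B (X j) (X k)) (X i)) :=
    eq_neg_of_add_eq_zero_right hk
  rw [hC]
  module
end
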